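/- arXiv:1402.4983 — 2 statements merged into one kernel-verified Lean document; each statement's English description precedes it below -/
import Mathlib

section
/- The family ( 𝓛^l_0 / l )_{l > 0} is bounded away from zero in probability as l → ∞: for every ε > 0 there exists c > 0 such that limsup_{l→∞} P( 𝓛^l_0 < c·l ) ≤ ε. -/
set_option linter.unusedSectionVars false

open MeasureTheory Filter ProbabilityTheory

namespace SRW

variable {Ω : Type*} [MeasurableSpace Ω]

/-- Block sigma-algebra generated by the steps with indices in `I`. -/
def mB (ξ : ℕ → Ω → ℤ) (I : Set ℕ) : MeasurableSpace Ω :=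
  ⨆ i ∈ I, MeasurableSpace.comap (ξ i) inferInstance

/-- Partial sum of the steps over `[t, t+n)`. -/
def St (ξ : ℕ → Ω → ℤ) (t n : ℕ) (ω : Ω) : ℤ := ∑ i ∈ Finset.Ico t (t + n), ξ i ω

/-- Stopping condition: the shifted walk is back at `0` or has reached `±L`. -/
def stp (ξ : ℕ → Ω → ℤ) (L t n : ℕ) (ω : Ω) : Prop :=
  St ξ t n ω = 0 ∨ (L : ℤ) ≤ |St ξ t n ω|


/-- no stop in `[1, n]` -/
def Gset (ξ : ℕ → Ω → ℤ) (L t n : ℕ) : Set Ω :=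
  {ω | ∀ m, 1 ≤ m → m ≤ n → ¬ stp ξ L t m ω}

instance stpDec (ξ : ℕ → Ω → ℤ) (L t n : ℕ) (ω : Ω) : Decidable (stp ξ L t n ω) :=
  inferInstanceAs (Decidable (_ ∨ _))

instance exDec (ξ : ℕ → Ω → ℤ) (L t n : ℕ) (ω : Ω) :
    Decidable (∃ m, 1 ≤ m ∧ m ≤ n ∧ stp ξ L t m ω) := by
  have i : Decidable (∃ m ∈ Finset.Icc 1 n, stp ξ L t m ω) := inferInstance
  exact decidable_of_iff _
    (by simp [Finset.mem_Icc, and_assoc] : (∃ m ∈ Finset.Icc 1 n, stp ξ L t m ω) ↔ _)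

/-- the stopping time truncated at `n` -/
def ρB (ξ : ℕ → Ω → ℤ) (L t n : ℕ) (ω : Ω) : ℕ :=
  if h : ∃ m, 1 ≤ m ∧ m ≤ n ∧ stp ξ L t m ω then Nat.find h else n

/-- stopped before `n` and the stopped position is at `±L` -/
def ExitSet (ξ : ℕ → Ω → ℤ) (L t n : ℕ) : Set Ω :=
  {ω | ω ∉ Gset ξ L t n ∧ (L : ℤ) ≤ |St ξ t (ρB ξ L t n ω) ω|}

/-- the shifted walk returns to `0` before reaching `±L` -/
def Rset (ξ : ℕ → Ω → ℤ) (L t : ℕ) : Set Ω :=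
  {ω | ∃ s, 1 ≤ s ∧ St ξ t s ω = 0 ∧ ∀ u, 1 ≤ u → u < s → |St ξ t u ω| < (L : ℤ)}

/-- the stopped walk -/
def Mfun (ξ : ℕ → Ω → ℤ) (L t n : ℕ) (ω : Ω) : ℝ :=
  ((|St ξ t (ρB ξ L t n ω) ω| : ℤ) : ℝ)

variable (ξ : ℕ → Ω → ℤ)

lemma St_succ (t n : ℕ) (ω : Ω) : St ξ t (n + 1) ω = St ξ t n ω + ξ (t + n) ω := by
  rw [St, St, ← Nat.add_assoc, Finset.sum_Ico_succ_top (Nat.le_add_right t n)]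

lemma St_one (t : ℕ) (ω : Ω) : St ξ t 1 ω = ξ t ω := by
  simp [St]

lemma ρB_le (L t n : ℕ) (ω : Ω) : ρB ξ L t n ω ≤ n := by
  rw [ρB]
  split
  · next h => exact (Nat.find_spec h).2.1
  · exact le_rfl

lemma Gset_zero (L t : ℕ) (ω : Ω) : ω ∈ Gset ξ L t 0 := by
  intro m hm hm0
  omega

lemma Gset_antitone (L t n : ℕ) {ω : Ω} (h : ω ∈ Gset ξ L t (n + 1)) : ω ∈ Gset ξ L t n :=
  fun m hm hmn => h m hm (hmn.trans (Nat.le_succ n))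

lemma ρB_eq_of_mem (L t n : ℕ) {ω : Ω} (h : ω ∈ Gset ξ L t n) : ρB ξ L t n ω = n := by
  rw [ρB, dif_neg]
  rintro ⟨m, hm1, hmn, hms⟩
  exact h m hm1 hmn hms

lemma ρB_spec (L t n : ℕ) {ω : Ω} (h : ω ∉ Gset ξ L t n) :
    1 ≤ ρB ξ L t n ω ∧ ρB ξ L t n ω ≤ n ∧ stp ξ L t (ρB ξ L t n ω) ω ∧
      ∀ u, 1 ≤ u → u < ρB ξ L t n ω → ¬ stp ξ L t u ω := by
  have hex : ∃ m, 1 ≤ m ∧ m ≤ n ∧ stp ξ L t m ω := by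
    by_contra hc
    push_neg at hc
    exact h (fun m hm hmn hs => (hc m hm hmn) hs)
  rw [ρB, dif_pos hex]
  refine ⟨(Nat.find_spec hex).1, (Nat.find_spec hex).2.1, (Nat.find_spec hex).2.2, ?_⟩
  intro u hu1 hu2 hs
  exact Nat.find_min hex hu2 ⟨hu1, hu2.le.trans ((Nat.find_spec hex).2.1), hs⟩

lemma ρB_succ_of_not_mem (L t n : ℕ) {ω : Ω} (h : ω ∉ Gset ξ L t n) :
    ρB ξ L t (n + 1) ω = ρB ξ L t n ω := by
  have hex : ∃ m, 1 ≤ m ∧ m ≤ n ∧ stp ξ L t m ω := by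
    by_contra hc
    push_neg at hc
    exact h (fun m hm hmn hs => (hc m hm hmn) hs)
  have hex' : ∃ m, 1 ≤ m ∧ m ≤ n + 1 ∧ stp ξ L t m ω := by
    obtain ⟨m, h1, h2, h3⟩ := hex
    exact ⟨m, h1, h2.trans (Nat.le_succ n), h3⟩
  rw [ρB, ρB, dif_pos hex, dif_pos hex']
  rw [Nat.find_eq_iff]
  refine ⟨⟨(Nat.find_spec hex).1, ((Nat.find_spec hex).2.1).trans (Nat.le_succ n),
      (Nat.find_spec hex).2.2⟩, ?_⟩
  intro m hm ⟨h1, _h2, h3⟩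
  exact Nat.find_min hex hm ⟨h1, (Nat.le_of_lt_succ (lt_of_lt_of_le hm ((Nat.find_spec hex).2.1.trans (Nat.le_succ n)))).trans (le_refl n) , h3⟩

lemma ρB_succ_of_mem (L t n : ℕ) {ω : Ω} (h : ω ∈ Gset ξ L t n) :
    ρB ξ L t (n + 1) ω = n + 1 := by
  rw [ρB]
  split
  · next hex =>
    rw [Nat.find_eq_iff]
    have hsp := Nat.find_spec hex
    refine ⟨⟨by omega, le_rfl, ?_⟩, ?_⟩
    · -- stp at n+1 : since no stop in [1,n], the witness must be n+1
      obtain ⟨m, h1, h2, h3⟩ := hex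
      rcases Nat.lt_or_ge m (n+1) with hlt | hge
      · exact absurd h3 (h m h1 (Nat.lt_succ_iff.1 hlt))
      · have : m = n + 1 := le_antisymm h2 hge
        rwa [← this]
    · intro m hm ⟨h1, _, h3⟩
      exact h m h1 (Nat.lt_succ_iff.1 hm) h3
  · rfl

lemma ρB_one (L t : ℕ) (ω : Ω) : ρB ξ L t 1 ω = 1 := by
  have := ρB_succ_of_mem ξ L t 0 (Gset_zero ξ L t ω)
  simpa using this

lemma ExitSet_mono (L t n : ℕ) : ExitSet ξ L t n ⊆ ExitSet ξ L t (n + 1) := by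
  rintro ω ⟨h1, h2⟩
  refine ⟨fun hG => h1 (Gset_antitone ξ L t n hG), ?_⟩
  rwa [ρB_succ_of_not_mem ξ L t n h1]

lemma ρB_eq_iff (L t n m : ℕ) (ω : Ω) :
    ρB ξ L t n ω = m ↔
      (ω ∈ Gset ξ L t n ∧ m = n) ∨
      (1 ≤ m ∧ m ≤ n ∧ stp ξ L t m ω ∧ ∀ u, 1 ≤ u → u < m → ¬ stp ξ L t u ω) := by
  by_cases hG : ω ∈ Gset ξ L t n
  · rw [ρB_eq_of_mem ξ L t n hG]
    constructor
    · rintro rfl; exact Or.inl ⟨hG, rfl⟩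
    · rintro (⟨_, rfl⟩ | ⟨h1, h2, h3, _⟩)
      · rfl
      · exact absurd h3 (hG m h1 h2)
  · obtain ⟨h1, h2, h3, h4⟩ := ρB_spec ξ L t n hG
    constructor
    · rintro rfl; exact Or.inr ⟨h1, h2, h3, h4⟩
    · rintro (⟨hG', _⟩ | ⟨h1', h2', h3', h4'⟩)
      · exact absurd hG' hG
      · rcases Nat.lt_trichotomy (ρB ξ L t n ω) m with h | h | h
        · exact absurd h3 (h4' _ h1 h)
        · exact h
        · exact absurd h3' (h4 _ h1' h)


section Meas

variable (ξ : ℕ → Ω → ℤ)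

lemma mB_le (hξmeas : ∀ i, Measurable (ξ i)) (I : Set ℕ) : mB ξ I ≤ ‹MeasurableSpace Ω› :=
  iSup₂_le fun i _ => measurable_iff_comap_le.1 (hξmeas i)

lemma measurable_xi_block {I : Set ℕ} {i : ℕ} (hi : i ∈ I) : Measurable[mB ξ I] (ξ i) :=
  measurable_iff_comap_le.2
    (le_iSup₂ (f := fun i (_ : i ∈ I) => MeasurableSpace.comap (ξ i)
      (inferInstance : MeasurableSpace ℤ)) i hi)

lemma measurable_St_block {I : Set ℕ} (t n : ℕ) (hI : ∀ i, t ≤ i → i < t + n → i ∈ I) :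
    Measurable[mB ξ I] (St ξ t n) := by
  have : St ξ t n = fun ω => ∑ i ∈ Finset.Ico t (t + n), ξ i ω := rfl
  rw [this]
  refine Finset.measurable_sum _ fun i hi => ?_
  rw [Finset.mem_Ico] at hi
  exact measurable_xi_block ξ (hI i hi.1 hi.2)

lemma measurableSet_stp_block {I : Set ℕ} (L t n : ℕ) (hI : ∀ i, t ≤ i → i < t + n → i ∈ I) :
    MeasurableSet[mB ξ I] {ω | stp ξ L t n ω} :=
  measurable_St_block ξ t n hI (show MeasurableSet {x : ℤ | x = 0 ∨ (L : ℤ) ≤ |x|} from trivial)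

lemma measurableSet_Gset_block {I : Set ℕ} (L t n : ℕ) (hI : ∀ i, t ≤ i → i < t + n → i ∈ I) :
    MeasurableSet[mB ξ I] (Gset ξ L t n) := by
  have : Gset ξ L t n = ⋂ m ∈ Finset.Icc 1 n, {ω | stp ξ L t m ω}ᶜ := by
    ext ω
    simp only [Gset, Set.mem_setOf_eq, Set.mem_iInter, Set.mem_compl_iff, Finset.mem_Icc]
    tauto
  rw [this]
  refine Finset.measurableSet_biInter _ fun m hm => ?_
  rw [Finset.mem_Icc] at hm
  exact (measurableSet_stp_block ξ L t m fun i h1 h2 => hI i h1 (by omega)).compl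

lemma measurableSet_ρB_eq_block {I : Set ℕ} (L t n m : ℕ)
    (hI : ∀ i, t ≤ i → i < t + n → i ∈ I) :
    MeasurableSet[mB ξ I] {ω | ρB ξ L t n ω = m} := by
  have hset : {ω | ρB ξ L t n ω = m} =
      ((if m = n then Gset ξ L t n else ∅) ∪
        (if 1 ≤ m ∧ m ≤ n then
          ({ω | stp ξ L t m ω} ∩ ⋂ u ∈ Finset.Ico 1 m, {ω | stp ξ L t u ω}ᶜ) else ∅)) := by
    ext ω
    rw [Set.mem_setOf_eq, ρB_eq_iff]
    constructor
    · rintro (⟨hG, rfl⟩ | ⟨h1, h2, h3, h4⟩)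
      · left; rw [if_pos rfl]; exact hG
      · right; rw [if_pos ⟨h1, h2⟩]
        refine ⟨h3, ?_⟩
        simp only [Set.mem_iInter, Set.mem_compl_iff, Set.mem_setOf_eq, Finset.mem_Ico]
        intro u hu
        exact h4 u hu.1 hu.2
    · rintro (h | h)
      · split_ifs at h with he
        · exact Or.inl ⟨h, he⟩
        · exact absurd h (Set.notMem_empty ω)
      · split_ifs at h with he
        · obtain ⟨h3, h4⟩ := h
          simp only [Set.mem_iInter, Set.mem_compl_iff, Set.mem_setOf_eq, Finset.mem_Ico] at h4
          exact Or.inr ⟨he.1, he.2, h3, fun u hu1 hu2 => h4 u ⟨hu1, hu2⟩⟩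
        · exact absurd h (Set.notMem_empty ω)
  rw [hset]
  have h1 : MeasurableSet[mB ξ I] (if m = n then Gset ξ L t n else ∅) := by
    split_ifs
    · exact measurableSet_Gset_block ξ L t n hI
    · exact (@MeasurableSet.empty Ω (mB ξ I))
  have h2 : MeasurableSet[mB ξ I] (if 1 ≤ m ∧ m ≤ n then
      ({ω | stp ξ L t m ω} ∩ ⋂ u ∈ Finset.Ico 1 m, {ω | stp ξ L t u ω}ᶜ) else ∅) := by
    split_ifs with he
    · refine (measurableSet_stp_block ξ L t m fun i h1 h2 => hI i h1 (by omega)).inter ?_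
      refine Finset.measurableSet_biInter _ fun u hu => ?_
      rw [Finset.mem_Ico] at hu
      exact (measurableSet_stp_block ξ L t u fun i h1 h2 => hI i h1 (by omega)).compl
    · exact (@MeasurableSet.empty Ω (mB ξ I))
  exact h1.union h2

lemma measurableSet_ExitSet_block {I : Set ℕ} (L t n : ℕ)
    (hI : ∀ i, t ≤ i → i < t + n → i ∈ I) :
    MeasurableSet[mB ξ I] (ExitSet ξ L t n) := by
  have hset : ExitSet ξ L t n = ⋃ m ∈ Finset.range (n + 1),
      ({ω | ρB ξ L t n ω = m} ∩ ((Gset ξ L t n)ᶜ ∩ {ω | (L:ℤ) ≤ |St ξ t m ω|})) := by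
    ext ω
    simp only [ExitSet, Set.mem_setOf_eq, Set.mem_iUnion, Set.mem_inter_iff,
      Set.mem_compl_iff, Finset.mem_range]
    constructor
    · rintro ⟨h1, h2⟩
      exact ⟨ρB ξ L t n ω, Nat.lt_succ_of_le (ρB_le ξ L t n ω), rfl, h1, h2⟩
    · rintro ⟨m, _, rfl, h1, h2⟩
      exact ⟨h1, h2⟩
  rw [hset]
  refine Finset.measurableSet_biUnion _ fun m hm => ?_
  rw [Finset.mem_range] at hm
  refine (measurableSet_ρB_eq_block ξ L t n m hI).inter
    (((measurableSet_Gset_block ξ L t n hI).compl).inter ?_)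
  exact measurable_St_block ξ t m (fun i h1 h2 => hI i h1 (by omega))
    (show MeasurableSet {x : ℤ | (L:ℤ) ≤ |x|} from trivial)

lemma measurableSet_Rset_block (L t : ℕ) :
    MeasurableSet[mB ξ {i | t ≤ i}] (Rset ξ L t) := by
  have hset : Rset ξ L t = ⋃ s : ℕ, (if 1 ≤ s then
      ({ω | St ξ t s ω = 0} ∩ ⋂ u ∈ Finset.Ico 1 s, {ω | |St ξ t u ω| < (L:ℤ)}) else ∅) := by
    ext ω
    simp only [Rset, Set.mem_setOf_eq, Set.mem_iUnion]
    constructor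
    · rintro ⟨s, h1, h2, h3⟩
      refine ⟨s, ?_⟩
      rw [if_pos h1]
      refine ⟨h2, ?_⟩
      simp only [Set.mem_iInter, Set.mem_setOf_eq, Finset.mem_Ico]
      exact fun u hu => h3 u hu.1 hu.2
    · rintro ⟨s, hs⟩
      split_ifs at hs with h1
      · obtain ⟨h2, h3⟩ := hs
        simp only [Set.mem_iInter, Set.mem_setOf_eq, Finset.mem_Ico] at h3
        exact ⟨s, h1, h2, fun u hu1 hu2 => h3 u ⟨hu1, hu2⟩⟩
      · exact absurd hs (Set.notMem_empty ω)
  rw [hset]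
  refine MeasurableSet.iUnion fun s => ?_
  have hSt : ∀ u : ℕ, Measurable[mB ξ {i | t ≤ i}] (St ξ t u) := fun u =>
    measurable_St_block ξ t u (fun i hi _ => hi)
  split_ifs with h1
  · exact (hSt s (show MeasurableSet {x : ℤ | x = 0} from trivial)).inter
      (Finset.measurableSet_biInter _ fun u _ =>
        hSt u (show MeasurableSet {x : ℤ | |x| < (L:ℤ)} from trivial))
  · exact (@MeasurableSet.empty Ω (mB ξ {i | t ≤ i}))

lemma measurable_Mfun (hξmeas : ∀ i, Measurable (ξ i)) (L t n : ℕ) :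
    Measurable (Mfun ξ L t n) := by
  have hle := mB_le ξ hξmeas {i | t ≤ i}
  have hfun : Mfun ξ L t n = fun ω =>
      ∑ m ∈ Finset.range (n + 1), if ρB ξ L t n ω = m then ((|St ξ t m ω| : ℤ) : ℝ) else 0 := by
    funext ω
    rw [Finset.sum_ite_eq (Finset.range (n+1)) (ρB ξ L t n ω),
      if_pos (Finset.mem_range.2 (Nat.lt_succ_of_le (ρB_le ξ L t n ω)))]
    rfl
  rw [hfun]
  refine Finset.measurable_sum _ fun m _ => Measurable.ite ?_ ?_ measurable_const
  · exact hle _ (measurableSet_ρB_eq_block ξ L t n m (fun i h1 h2 => h1))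
  · exact (measurable_from_top (f := fun x : ℤ => ((|x| : ℤ) : ℝ))).comp
      ((measurable_St_block ξ t m fun i h1 h2 => h1).mono hle le_rfl)

end Meas


section Indep

variable {P : Measure Ω} [IsProbabilityMeasure P] (ξ : ℕ → Ω → ℤ)

lemma indep_block (hξmeas : ∀ i, Measurable (ξ i))
    (hξindep : iIndepFun ξ P) (t : ℕ) {A B : Set Ω}
    (hA : MeasurableSet[mB ξ {i | i < t}] A) (hB : MeasurableSet[mB ξ {i | t ≤ i}] B) :
    P (A ∩ B) = P A * P B := by
  have hd : Disjoint {i : ℕ | i < t} {i : ℕ | t ≤ i} := by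
    rw [Set.disjoint_left]
    intro i hi hi2
    simp only [Set.mem_setOf_eq] at hi hi2
    omega
  have h := indep_iSup_of_disjoint (fun i => measurable_iff_comap_le.1 (hξmeas i))
    hξindep.iIndep hd
  exact (Indep_iff _ _ _).1 h A B hA hB

lemma indepFun_xi (hξmeas : ∀ i, Measurable (ξ i))
    (hξindep : iIndepFun ξ P) (j : ℕ) (X : Ω → ℝ)
    (hX : Measurable[mB ξ {i | i < j}] X) :
    IndepFun X (fun ω => (ξ j ω : ℝ)) P := by
  have hd : Disjoint {i : ℕ | i < j} ({j} : Set ℕ) := by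
    rw [Set.disjoint_left]
    intro i hi hi2
    simp only [Set.mem_setOf_eq] at hi
    rw [Set.mem_singleton_iff] at hi2
    omega
  have h := indep_iSup_of_disjoint (fun i => measurable_iff_comap_le.1 (hξmeas i))
    hξindep.iIndep hd
  have h2 : (⨆ i ∈ ({j} : Set ℕ), MeasurableSpace.comap (ξ i) inferInstance)
      = MeasurableSpace.comap (ξ j) inferInstance := by simp
  rw [h2] at h
  have hXle : MeasurableSpace.comap X inferInstance ≤ mB ξ {i | i < j} :=
    measurable_iff_comap_le.1 hX
  have hYle : MeasurableSpace.comap (fun ω => (ξ j ω : ℝ)) inferInstance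
      ≤ MeasurableSpace.comap (ξ j) inferInstance := by
    refine measurable_iff_comap_le.1 ?_
    exact (measurable_from_top (f := fun x : ℤ => (x : ℝ))).comp
      (measurable_iff_comap_le.2 le_rfl)
  exact indep_of_indep_of_le_right (indep_of_indep_of_le_left h hXle) hYle

lemma ae_pm_one (hξmeas : ∀ i, Measurable (ξ i))
    (hξ1 : ∀ i, P {ω | ξ i ω = 1} = 1 / 2) (hξ2 : ∀ i, P {ω | ξ i ω = -1} = 1 / 2) :
    ∀ᵐ ω ∂P, ∀ i, ξ i ω = 1 ∨ ξ i ω = -1 := by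
  rw [ae_all_iff]
  intro i
  have hA : MeasurableSet {ω | ξ i ω = 1} := (hξmeas i) (measurableSet_singleton 1)
  have hB : MeasurableSet {ω | ξ i ω = -1} := (hξmeas i) (measurableSet_singleton (-1))
  have hd : Disjoint {ω | ξ i ω = 1} {ω | ξ i ω = -1} := by
    rw [Set.disjoint_left]
    intro ω h1 h2
    rw [Set.mem_setOf_eq] at h1 h2
    omega
  have hu : P ({ω | ξ i ω = 1} ∪ {ω | ξ i ω = -1}) = 1 := by
    rw [measure_union hd hB, hξ1 i, hξ2 i, ENNReal.add_halves]
  have hnull : P (({ω | ξ i ω = 1} ∪ {ω | ξ i ω = -1})ᶜ) = 0 := by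
    rw [prob_compl_eq_one_sub (hA.union hB), hu, tsub_self]
  rw [ae_iff]
  convert hnull using 2
  ext ω; simp

lemma integrable_bdd {X : Ω → ℝ} (hm : AEStronglyMeasurable X P) {C : ℝ}
    (h : ∀ᵐ ω ∂P, |X ω| ≤ C) : Integrable X P :=
  (integrable_const C).mono' hm (h.mono fun ω hω => by rwa [Real.norm_eq_abs])

lemma integral_xi (hξmeas : ∀ i, Measurable (ξ i))
    (hξ1 : ∀ i, P {ω | ξ i ω = 1} = 1 / 2) (hξ2 : ∀ i, P {ω | ξ i ω = -1} = 1 / 2)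
    (j : ℕ) : ∫ ω, (ξ j ω : ℝ) ∂P = 0 := by
  have hA : MeasurableSet {ω | ξ j ω = 1} := (hξmeas j) (measurableSet_singleton 1)
  have hB : MeasurableSet {ω | ξ j ω = -1} := (hξmeas j) (measurableSet_singleton (-1))
  have hd : Disjoint {ω | ξ j ω = 1} {ω | ξ j ω = -1} := by
    rw [Set.disjoint_left]
    intro ω h1 h2
    rw [Set.mem_setOf_eq] at h1 h2
    omega
  have hu : P ({ω | ξ j ω = 1} ∪ {ω | ξ j ω = -1}) = 1 := by
    rw [measure_union hd hB, hξ1 j, hξ2 j, ENNReal.add_halves]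
  have hnull : P (({ω | ξ j ω = 1} ∪ {ω | ξ j ω = -1})ᶜ) = 0 := by
    rw [prob_compl_eq_one_sub (hA.union hB), hu, tsub_self]
  have hmem : ∀ᵐ ω ∂P, ω ∈ {ω | ξ j ω = 1} ∪ {ω | ξ j ω = -1} := by
    rw [ae_iff]
    convert hnull using 2
    ext ω; simp
  have hg : (fun ω => (ξ j ω : ℝ)) =ᵐ[P]
      (fun ω => ({ω | ξ j ω = 1}).indicator (fun _ => (1:ℝ)) ω
        - ({ω | ξ j ω = -1}).indicator (fun _ => (1:ℝ)) ω) := by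
    filter_upwards [hmem] with ω hω
    rcases hω with h1 | h1 <;> rw [Set.mem_setOf_eq] at h1 <;>
      simp only [Set.indicator_apply, Set.mem_setOf_eq, h1] <;> norm_num
  rw [integral_congr_ae hg, integral_sub ((integrable_const (1:ℝ)).indicator hA)
    ((integrable_const (1:ℝ)).indicator hB), integral_indicator_const _ hA,
    integral_indicator_const _ hB, measureReal_def, measureReal_def, hξ1 j, hξ2 j, sub_self]

lemma integral_mul_xi (hξmeas : ∀ i, Measurable (ξ i))
    (hξindep : iIndepFun ξ P)
    (hξ1 : ∀ i, P {ω | ξ i ω = 1} = 1 / 2) (hξ2 : ∀ i, P {ω | ξ i ω = -1} = 1 / 2)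
    (j : ℕ) (X : Ω → ℝ) (hX : Measurable[mB ξ {i | i < j}] X) (hXb : ∀ ω, |X ω| ≤ 1) :
    ∫ ω, X ω * (ξ j ω : ℝ) ∂P = 0 := by
  have hXm : Measurable X := hX.mono (mB_le ξ hξmeas _) le_rfl
  have hXi : Integrable X P := integrable_bdd hXm.aestronglyMeasurable (ae_of_all _ hXb)
  have hYm : Measurable (fun ω => (ξ j ω : ℝ)) :=
    (measurable_from_top (f := fun x : ℤ => (x : ℝ))).comp (hξmeas j)
  have hYi : Integrable (fun ω => (ξ j ω : ℝ)) P := by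
    refine integrable_bdd (C := 1) hYm.aestronglyMeasurable
      (((ae_pm_one ξ hξmeas hξ1 hξ2)).mono fun ω h => ?_)
    rcases h j with h1 | h1 <;> rw [h1] <;> norm_num
  have hmul := (indepFun_xi ξ hξmeas hξindep j X hX).integral_mul_eq_mul_integral hXi.aestronglyMeasurable hYi.aestronglyMeasurable
  have : (fun ω => X ω * (ξ j ω : ℝ)) = X * (fun ω => (ξ j ω : ℝ)) := rfl
  rw [show ∫ ω, X ω * (ξ j ω : ℝ) ∂P = ∫ ω, (X * (fun ω => (ξ j ω : ℝ))) ω ∂P from rfl]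
  rw [hmul, integral_xi ξ hξmeas hξ1 hξ2 j, mul_zero]

end Indep


lemma abs_add_pm (x e : ℤ) (hx : x ≠ 0) (he : e = 1 ∨ e = -1) :
    |x + e| = |x| + x.sign * e := by
  rcases lt_trichotomy x 0 with h|h|h
  · rw [abs_of_neg h, Int.sign_eq_neg_one_of_neg h]
    rcases he with rfl | rfl
    · rw [abs_of_nonpos (by omega)]; ring
    · rw [abs_of_neg (by omega)]; ring
  · exact absurd h hx
  · rw [abs_of_pos h, Int.sign_eq_one_of_pos h]
    rcases he with rfl | rfl
    · rw [abs_of_pos (by omega)]; ring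
    · rw [abs_of_nonneg (by omega)]; ring

section Mart

variable {P : Measure Ω} [IsProbabilityMeasure P] (ξ : ℕ → Ω → ℤ)

lemma St_abs_le {ω : Ω} (hω : ∀ i, ξ i ω = 1 ∨ ξ i ω = -1) (t m : ℕ) :
    |St ξ t m ω| ≤ (m : ℤ) := by
  calc |St ξ t m ω| ≤ ∑ i ∈ Finset.Ico t (t + m), |ξ i ω| :=
        Finset.abs_sum_le_sum_abs _ _
    _ ≤ ∑ _i ∈ Finset.Ico t (t + m), 1 := by
        refine Finset.sum_le_sum fun i _ => ?_
        rcases hω i with h | h <;> rw [h] <;> norm_num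
    _ = (m : ℤ) := by
        rw [Finset.sum_const, Nat.card_Ico]
        simp

lemma integrable_Mfun (hξmeas : ∀ i, Measurable (ξ i))
    (hξ1 : ∀ i, P {ω | ξ i ω = 1} = 1 / 2) (hξ2 : ∀ i, P {ω | ξ i ω = -1} = 1 / 2)
    (L t m : ℕ) : Integrable (Mfun ξ L t m) P := by
  refine integrable_bdd (C := (m : ℝ)) (measurable_Mfun ξ hξmeas L t m).aestronglyMeasurable ?_
  filter_upwards [ae_pm_one ξ hξmeas hξ1 hξ2] with ω hω
  have hb : |St ξ t (ρB ξ L t m ω) ω| ≤ (ρB ξ L t m ω : ℤ) := St_abs_le ξ hω t _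
  have hb2 : (ρB ξ L t m ω : ℤ) ≤ (m : ℤ) := by exact_mod_cast ρB_le ξ L t m ω
  rw [Mfun, abs_of_nonneg (by exact_mod_cast abs_nonneg (St ξ t (ρB ξ L t m ω) ω))]
  exact_mod_cast hb.trans hb2

lemma integral_Mfun_succ (hξmeas : ∀ i, Measurable (ξ i))
    (hξindep : iIndepFun ξ P)
    (hξ1 : ∀ i, P {ω | ξ i ω = 1} = 1 / 2) (hξ2 : ∀ i, P {ω | ξ i ω = -1} = 1 / 2)
    (L t n : ℕ) (hn : 1 ≤ n) :
    ∫ ω, Mfun ξ L t (n + 1) ω ∂P = ∫ ω, Mfun ξ L t n ω ∂P := by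
  set X : Ω → ℝ :=
    (Gset ξ L t n).indicator (fun ω => (((St ξ t n ω).sign : ℤ) : ℝ)) with hXdef
  have hGmeas : MeasurableSet[mB ξ {i | i < t + n}] (Gset ξ L t n) :=
    measurableSet_Gset_block ξ L t n (fun i _ h2 => h2)
  have hXmeasB : Measurable[mB ξ {i | i < t + n}] X := by
    refine Measurable.indicator ?_ hGmeas
    exact (measurable_from_top (f := fun x : ℤ => ((x.sign : ℤ) : ℝ))).comp
      (measurable_St_block ξ t n (fun i _ h2 => h2))
  have hXb : ∀ ω, |X ω| ≤ 1 := by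
    classical
    intro ω
    rw [hXdef, Set.indicator_apply]
    split_ifs with h
    · rcases lt_trichotomy (St ξ t n ω) 0 with h1|h1|h1 <;>
        simp [Int.sign_eq_one_of_pos, Int.sign_eq_neg_one_of_neg, h1]
    · norm_num
  have hae := ae_pm_one ξ hξmeas hξ1 hξ2
  have hptw : ∀ᵐ ω ∂P,
      Mfun ξ L t (n + 1) ω = Mfun ξ L t n ω + X ω * (ξ (t + n) ω : ℝ) := by
    filter_upwards [hae] with ω hω
    by_cases hG : ω ∈ Gset ξ L t n
    · have h1 : ρB ξ L t n ω = n := ρB_eq_of_mem ξ L t n hG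
      have h2 : ρB ξ L t (n + 1) ω = n + 1 := ρB_succ_of_mem ξ L t n hG
      have hne : St ξ t n ω ≠ 0 := fun h0 => hG n hn le_rfl (Or.inl h0)
      have habs : |St ξ t (n + 1) ω| = |St ξ t n ω| + (St ξ t n ω).sign * ξ (t + n) ω := by
        rw [St_succ]
        exact abs_add_pm _ _ hne (hω (t + n))
      rw [Mfun, Mfun, h1, h2, habs, hXdef, Set.indicator_of_mem hG]
      push_cast
      ring
    · have h2 : ρB ξ L t (n + 1) ω = ρB ξ L t n ω := ρB_succ_of_not_mem ξ L t n hG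
      rw [Mfun, Mfun, h2, hXdef, Set.indicator_of_notMem hG]
      ring
  have hXm : Measurable X := hXmeasB.mono (mB_le ξ hξmeas _) le_rfl
  have hYm : Measurable (fun ω => (ξ (t + n) ω : ℝ)) :=
    (measurable_from_top (f := fun x : ℤ => (x : ℝ))).comp (hξmeas (t + n))
  have hXYint : Integrable (fun ω => X ω * (ξ (t + n) ω : ℝ)) P := by
    refine integrable_bdd (C := 1) (hXm.mul hYm).aestronglyMeasurable ?_
    filter_upwards [hae] with ω hω
    rw [abs_mul]
    rcases hω (t + n) with h | h <;> rw [h] <;>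
      simpa using hXb ω
  rw [integral_congr_ae hptw,
    integral_add (integrable_Mfun ξ hξmeas hξ1 hξ2 L t n) hXYint,
    integral_mul_xi ξ hξmeas hξindep hξ1 hξ2 (t + n) X hXmeasB hXb, add_zero]

lemma integral_Mfun_eq_one (hξmeas : ∀ i, Measurable (ξ i))
    (hξindep : iIndepFun ξ P)
    (hξ1 : ∀ i, P {ω | ξ i ω = 1} = 1 / 2) (hξ2 : ∀ i, P {ω | ξ i ω = -1} = 1 / 2)
    (L t n : ℕ) (hn : 1 ≤ n) : ∫ ω, Mfun ξ L t n ω ∂P = 1 := by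
  induction n, hn using Nat.le_induction with
  | base =>
    have h1 : Mfun ξ L t 1 =ᵐ[P] fun _ => (1 : ℝ) := by
      filter_upwards [ae_pm_one ξ hξmeas hξ1 hξ2] with ω hω
      rw [Mfun, ρB_one, St_one]
      rcases hω t with h | h <;> rw [h] <;> norm_num
    rw [integral_congr_ae h1]
    simp
  | succ n hn ih =>
    rw [integral_Mfun_succ ξ hξmeas hξindep hξ1 hξ2 L t n hn, ih]

lemma exit_bound (hξmeas : ∀ i, Measurable (ξ i))
    (hξindep : iIndepFun ξ P)
    (hξ1 : ∀ i, P {ω | ξ i ω = 1} = 1 / 2) (hξ2 : ∀ i, P {ω | ξ i ω = -1} = 1 / 2)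
    (L t n : ℕ) (hn : 1 ≤ n) :
    (L : ℝ) * (P (ExitSet ξ L t n)).toReal ≤ 1 := by
  have hEmeas : MeasurableSet (ExitSet ξ L t n) :=
    mB_le ξ hξmeas {i | t ≤ i} _ (measurableSet_ExitSet_block ξ L t n (fun i h1 _ => h1))
  have hmono : ∀ ω, ((ExitSet ξ L t n).indicator (fun _ => (L : ℝ))) ω ≤ Mfun ξ L t n ω := by
    classical
    intro ω
    rw [Set.indicator_apply]
    split_ifs with h
    · rw [Mfun]
      exact_mod_cast h.2
    · rw [Mfun]
      exact_mod_cast abs_nonneg (St ξ t (ρB ξ L t n ω) ω)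
  have hint := integral_mono ((integrable_const ((L : ℝ))).indicator hEmeas)
    (integrable_Mfun ξ hξmeas hξ1 hξ2 L t n) hmono
  rw [integral_indicator_const _ hEmeas,
    integral_Mfun_eq_one ξ hξmeas hξindep hξ1 hξ2 L t n hn, measureReal_def] at hint
  rw [mul_comm]
  simpa [smul_eq_mul] using hint

lemma exit_iUnion_bound (hξmeas : ∀ i, Measurable (ξ i))
    (hξindep : iIndepFun ξ P)
    (hξ1 : ∀ i, P {ω | ξ i ω = 1} = 1 / 2) (hξ2 : ∀ i, P {ω | ξ i ω = -1} = 1 / 2)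
    (L t : ℕ) (hL : 1 ≤ L) :
    P (⋃ n, ExitSet ξ L t n) ≤ ENNReal.ofReal (1 / L) := by
  have hmono : Monotone (fun n => ExitSet ξ L t n) :=
    monotone_nat_of_le_succ (ExitSet_mono ξ L t)
  have hLpos : (0 : ℝ) < (L : ℝ) := by exact_mod_cast hL
  rw [hmono.directed_le.measure_iUnion]
  refine iSup_le fun n => ?_
  rcases Nat.eq_zero_or_pos n with rfl | hn
  · have hempty : ExitSet ξ L t 0 = ∅ := by
      ext ω
      simp only [ExitSet, Set.mem_setOf_eq, Set.mem_empty_iff_false, iff_false, not_and]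
      intro h
      exact absurd (Gset_zero ξ L t ω) h
    rw [hempty, measure_empty]
    exact zero_le
  · rw [ENNReal.le_ofReal_iff_toReal_le (measure_ne_top P _) (by positivity)]
    rw [le_div_iff₀ hLpos, mul_comm]
    exact exit_bound ξ hξmeas hξindep hξ1 hξ2 L t n hn

lemma rset_bound (hξmeas : ∀ i, Measurable (ξ i))
    (hξindep : iIndepFun ξ P)
    (hξ1 : ∀ i, P {ω | ξ i ω = 1} = 1 / 2) (hξ2 : ∀ i, P {ω | ξ i ω = -1} = 1 / 2)
    (L t : ℕ) (hL : 1 ≤ L)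
    (hae_ex : ∀ᵐ ω ∂P, ∃ n, ω ∉ Gset ξ L t n) :
    1 - ENNReal.ofReal (1 / L) ≤ P (Rset ξ L t) := by
  have hsub : ∀ ω : Ω, (∃ n, ω ∉ Gset ξ L t n) →
      ω ∈ Rset ξ L t ∪ ⋃ n, ExitSet ξ L t n := by
    rintro ω ⟨n, hn⟩
    obtain ⟨h1, _h2, h3, h4⟩ := ρB_spec ξ L t n hn
    rcases h3 with h0 | hex
    · left
      refine ⟨ρB ξ L t n ω, h1, h0, fun u hu1 hu2 => ?_⟩
      have := h4 u hu1 hu2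
      rw [stp] at this
      push_neg at this
      exact this.2
    · right
      exact Set.mem_iUnion.2 ⟨n, hn, hex⟩
  have hae2 : ∀ᵐ ω ∂P, ω ∈ Rset ξ L t ∪ ⋃ n, ExitSet ξ L t n := hae_ex.mono hsub
  have h1 : 1 ≤ P (Rset ξ L t ∪ ⋃ n, ExitSet ξ L t n) := by
    have huniv : P {ω | ω ∈ Rset ξ L t ∪ ⋃ n, ExitSet ξ L t n} = 1 := by
      rw [← measure_univ (μ := P)]
      refine measure_congr ?_
      rw [Filter.eventuallyEq_set]
      filter_upwards [hae2] with ω hω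
      simp [hω]
    exact le_of_eq huniv.symm
  have h2 : (1 : ENNReal) ≤ P (Rset ξ L t) + ENNReal.ofReal (1 / L) := by
    refine h1.trans ((measure_union_le _ _).trans ?_)
    exact add_le_add_right (exit_iUnion_bound ξ hξmeas hξindep hξ1 hξ2 L t hL) _
  exact tsub_le_iff_right.2 h2

end Mart


section Walk

variable {P : Measure Ω} [IsProbabilityMeasure P] (ξ D : ℕ → Ω → ℤ)

/-- the `(k+1)`-st visit to `0` happens at time `t`, before leaving `(-L, L)` -/
def Cset (L k t : ℕ) : Set Ω :=
  {ω | D t ω = 0 ∧ ((Finset.range t).filter (fun n => D n ω = 0)).card = k ∧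
    ∀ u, u ≤ t → |D u ω| < (L : ℤ)}

/-- there are at least `k+1` visits to `0` strictly before leaving `(-L, L)` -/
def Bset (L k : ℕ) : Set Ω := ⋃ t, Cset D L k t

variable (hD : ∀ n ω, D n ω = ∑ i ∈ Finset.range n, ξ i ω)

include hD in
lemma St_eq_D (t s : ℕ) (ω : Ω) : St ξ t s ω = D (t + s) ω - D t ω := by
  rw [St, hD, hD]
  simp only [Finset.range_eq_Ico]
  rw [← Finset.sum_Ico_consecutive (fun i => ξ i ω) (Nat.zero_le t) (Nat.le_add_right t s),
    add_sub_cancel_left]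

include hD in
lemma abs_D_le {ω : Ω} (hω : ∀ i, ξ i ω = 1 ∨ ξ i ω = -1) (n : ℕ) : |D n ω| ≤ (n : ℤ) := by
  have h := St_abs_le ξ hω 0 n
  rw [St_eq_D ξ D hD 0 n ω, hD 0 ω] at h
  simpa using h

lemma Cset_pairwise_disjoint (L k : ℕ) :
    Pairwise (Function.onFun Disjoint (fun t => Cset D L k t)) := by
  have key : ∀ t t' : ℕ, t < t' → ∀ ω, ω ∈ Cset D L k t → ω ∈ Cset D L k t' → False := by
    rintro t t' htt ω ⟨hz, hc, _⟩ ⟨_, hc', _⟩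
    have hsub : insert t ((Finset.range t).filter (fun n => D n ω = 0)) ⊆
        (Finset.range t').filter (fun n => D n ω = 0) := by
      intro n hn
      rcases Finset.mem_insert.1 hn with rfl | hn
      · exact Finset.mem_filter.2 ⟨Finset.mem_range.2 htt, hz⟩
      · obtain ⟨hr, hz'⟩ := Finset.mem_filter.1 hn
        exact Finset.mem_filter.2 ⟨Finset.mem_range.2 ((Finset.mem_range.1 hr).trans htt), hz'⟩
    have hcard := Finset.card_le_card hsub
    rw [Finset.card_insert_of_notMem (fun h => absurd (Finset.mem_filter.1 h).1
      (by simp)), hc, hc'] at hcard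
    omega
  intro t t' htne
  rw [Function.onFun, Set.disjoint_left]
  intro ω h1 h2
  rcases Nat.lt_or_ge t t' with h | h
  · exact key t t' h ω h1 h2
  · exact key t' t (lt_of_le_of_ne h (Ne.symm htne)) ω h2 h1

include hD in
lemma Bset_succ (L k : ℕ) (hL : 1 ≤ L) :
    Bset D L (k + 1) = ⋃ t, (Cset D L k t ∩ Rset ξ L t) := by
  classical
  ext ω
  simp only [Bset, Set.mem_iUnion, Set.mem_inter_iff]
  constructor
  · rintro ⟨t', hz, hc, hb⟩
    set F := (Finset.range t').filter (fun n => D n ω = 0) with hF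
    have hne : F.Nonempty := Finset.card_pos.1 (by omega)
    set t := F.max' hne with ht
    have htF : t ∈ F := F.max'_mem hne
    have htlt : t < t' := Finset.mem_range.1 (Finset.mem_filter.1 htF).1
    have htz : D t ω = 0 := (Finset.mem_filter.1 htF).2
    refine ⟨t, ⟨htz, ?_, fun u hu => hb u (hu.trans htlt.le)⟩, ?_⟩
    · -- card of zeros before t is k
      have hfe : (Finset.range t).filter (fun n => D n ω = 0) = F.erase t := by
        ext n
        simp only [Finset.mem_filter, Finset.mem_range, Finset.mem_erase, hF]
        constructor
        · rintro ⟨h1, h2⟩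
          exact ⟨by omega, by omega, h2⟩
        · rintro ⟨h1, h2, h3⟩
          have hle : n ≤ t := F.le_max' n (Finset.mem_filter.2 ⟨Finset.mem_range.2 h2, h3⟩)
          exact ⟨by omega, h3⟩
      rw [hfe, Finset.card_erase_of_mem htF]
      omega
    · -- the return event
      refine ⟨t' - t, by omega, ?_, ?_⟩
      · rw [St_eq_D ξ D hD]
        have : t + (t' - t) = t' := by omega
        rw [this, hz, htz, sub_zero]
      · intro u hu1 hu2
        rw [St_eq_D ξ D hD, htz, sub_zero]
        exact hb (t + u) (by omega)
  · rintro ⟨t, ⟨hz, hc, hb⟩, hR⟩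
    have hex : ∃ s, 1 ≤ s ∧ St ξ t s ω = 0 ∧ ∀ u, 1 ≤ u → u < s → |St ξ t u ω| < (L:ℤ) := hR
    set s := Nat.find hex with hs
    obtain ⟨hs1, hs0, hsl⟩ := Nat.find_spec hex
    have hnozero : ∀ u, 1 ≤ u → u < s → St ξ t u ω ≠ 0 := by
      intro u hu1 hu2 h0
      exact Nat.find_min hex hu2 ⟨hu1, h0, fun v hv1 hv2 => hsl v hv1 (hv2.trans hu2)⟩
    refine ⟨t + s, ?_, ?_, ?_⟩
    · have hSt := St_eq_D ξ D hD t s ω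
      rw [hs0, hz, sub_zero] at hSt
      exact hSt.symm
    · have hins : (Finset.range (t + s)).filter (fun n => D n ω = 0) =
          insert t ((Finset.range t).filter (fun n => D n ω = 0)) := by
        ext n
        simp only [Finset.mem_filter, Finset.mem_range, Finset.mem_insert]
        constructor
        · rintro ⟨h1, h2⟩
          rcases Nat.lt_trichotomy n t with h | h | h
          · exact Or.inr ⟨h, h2⟩
          · exact Or.inl h
          · exfalso
            have hSt := St_eq_D ξ D hD t (n - t) ω
            have hnt : t + (n - t) = n := by omega
            rw [hnt, hz, h2] at hSt
            exact hnozero (n - t) (by omega) (by omega) (by omega)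
        · rintro (rfl | ⟨h1, h2⟩)
          · exact ⟨by omega, hz⟩
          · exact ⟨by omega, h2⟩
      rw [hins, Finset.card_insert_of_notMem (fun h => absurd (Finset.mem_filter.1 h).1
        (by simp)), hc]
    · intro u hu
      rcases Nat.lt_trichotomy u t with h | h | h
      · exact hb u h.le
      · exact hb u h.le
      · -- t < u ≤ t + s
        rcases Nat.eq_or_lt_of_le hu with rfl | hu2
        · have hSt := St_eq_D ξ D hD t s ω
          rw [hs0, hz, sub_zero] at hSt
          rw [← hSt, abs_zero]
          exact_mod_cast hL
        · have hSt := St_eq_D ξ D hD t (u - t) ω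
          have hnt : t + (u - t) = u := by omega
          rw [hnt, hz, sub_zero] at hSt
          rw [← hSt]
          exact hsl (u - t) (by omega) (by omega)

include hD in
lemma Cset_zero_univ (L : ℕ) (hL : 1 ≤ L) : Cset D L 0 0 = Set.univ := by
  ext ω
  simp only [Cset, Set.mem_setOf_eq, Set.mem_univ, iff_true]
  have h0 : D 0 ω = 0 := by rw [hD]; simp
  refine ⟨h0, by simp, ?_⟩
  intro u hu
  interval_cases u
  rw [h0, abs_zero]
  exact_mod_cast hL

include hD in
lemma measurableSet_Cset_block (L k t : ℕ) :
    MeasurableSet[mB ξ {i | i < t}] (Cset D L k t) := by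
  classical
  have hDm : ∀ u, u ≤ t → Measurable[mB ξ {i | i < t}] (fun ω => D u ω) := by
    intro u hu
    have he : (fun ω => D u ω) = fun ω => ∑ i ∈ Finset.range u, ξ i ω := by
      funext ω
      exact hD u ω
    rw [he]
    refine Finset.measurable_sum _ fun i hi => ?_
    rw [Finset.mem_range] at hi
    exact measurable_xi_block ξ (show i ∈ {i | i < t} from by simp only [Set.mem_setOf_eq]; omega)
  have hcardm : Measurable[mB ξ {i | i < t}]
      (fun ω => ((Finset.range t).filter (fun n => D n ω = 0)).card) := by
    have he : (fun ω => ((Finset.range t).filter (fun n => D n ω = 0)).card) =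
        fun ω => ∑ n ∈ Finset.range t, if D n ω = 0 then 1 else 0 := by
      funext ω
      rw [Finset.card_filter]
    rw [he]
    refine Finset.measurable_sum _ fun n hn => ?_
    rw [Finset.mem_range] at hn
    refine Measurable.ite ?_ measurable_const measurable_const
    exact hDm n hn.le (show MeasurableSet {x : ℤ | x = 0} from trivial)
  have hset : Cset D L k t = {ω | D t ω = 0} ∩
      ({ω | ((Finset.range t).filter (fun n => D n ω = 0)).card = k} ∩
        ⋂ u ∈ Finset.range (t + 1), {ω | |D u ω| < (L:ℤ)}) := by
    ext ω
    simp only [Cset, Set.mem_setOf_eq, Set.mem_inter_iff, Set.mem_iInter, Finset.mem_range]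
    constructor
    · rintro ⟨h1, h2, h3⟩
      exact ⟨h1, h2, fun u hu => h3 u (by omega)⟩
    · rintro ⟨h1, h2, h3⟩
      exact ⟨h1, h2, fun u hu => h3 u (by omega)⟩
  rw [hset]
  refine MeasurableSet.inter ?_ (MeasurableSet.inter ?_ ?_)
  · exact hDm t le_rfl (show MeasurableSet {x : ℤ | x = 0} from trivial)
  · exact hcardm (measurableSet_singleton k)
  · refine Finset.measurableSet_biInter _ fun u hu => ?_
    rw [Finset.mem_range] at hu
    exact hDm u (by omega) (show MeasurableSet {x : ℤ | |x| < (L:ℤ)} from trivial)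

end Walk


section Main

variable {P : Measure Ω} [IsProbabilityMeasure P] (ξ D : ℕ → Ω → ℤ)

lemma prob_Bset_succ (hξmeas : ∀ i, Measurable (ξ i))
    (hξindep : iIndepFun ξ P)
    (hξ1 : ∀ i, P {ω | ξ i ω = 1} = 1 / 2) (hξ2 : ∀ i, P {ω | ξ i ω = -1} = 1 / 2)
    (hD : ∀ n ω, D n ω = ∑ i ∈ Finset.range n, ξ i ω) (L k : ℕ) (hL : 1 ≤ L)
    (hae_ex : ∀ t : ℕ, ∀ᵐ ω ∂P, ∃ n, ω ∉ Gset ξ L t n) :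
    (1 - ENNReal.ofReal (1 / L)) * P (Bset D L k) ≤ P (Bset D L (k + 1)) := by
  have hCmeas : ∀ t, MeasurableSet (Cset D L k t) := fun t =>
    mB_le ξ hξmeas {i | i < t} _ (measurableSet_Cset_block ξ D hD L k t)
  have hRmeas : ∀ t, MeasurableSet (Rset ξ L t) := fun t =>
    mB_le ξ hξmeas {i | t ≤ i} _ (measurableSet_Rset_block ξ L t)
  have hpw : Pairwise (Function.onFun Disjoint (fun t => Cset D L k t ∩ Rset ξ L t)) := by
    intro t t' h
    exact ((Cset_pairwise_disjoint D L k) h).mono Set.inter_subset_left Set.inter_subset_left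
  rw [Bset_succ ξ D hD L k hL,
    measure_iUnion hpw (fun t => (hCmeas t).inter (hRmeas t)),
    Bset, measure_iUnion (Cset_pairwise_disjoint D L k) hCmeas, ← ENNReal.tsum_mul_left]
  refine ENNReal.tsum_le_tsum fun t => ?_
  rw [indep_block ξ hξmeas hξindep t (measurableSet_Cset_block ξ D hD L k t)
    (measurableSet_Rset_block ξ L t), mul_comm]
  exact mul_le_mul_left (rset_bound ξ hξmeas hξindep hξ1 hξ2 L t hL (hae_ex t))
    (P (Cset D L k t)) |>.trans_eq (mul_comm _ _) |>.trans_eq' (mul_comm _ _)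

lemma prob_Bset_ge (hξmeas : ∀ i, Measurable (ξ i))
    (hξindep : iIndepFun ξ P)
    (hξ1 : ∀ i, P {ω | ξ i ω = 1} = 1 / 2) (hξ2 : ∀ i, P {ω | ξ i ω = -1} = 1 / 2)
    (hD : ∀ n ω, D n ω = ∑ i ∈ Finset.range n, ξ i ω) (L : ℕ) (hL : 1 ≤ L)
    (hae_ex : ∀ t : ℕ, ∀ᵐ ω ∂P, ∃ n, ω ∉ Gset ξ L t n) (k : ℕ) :
    (1 - ENNReal.ofReal (1 / L)) ^ k ≤ P (Bset D L k) := by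
  induction k with
  | zero =>
    rw [pow_zero]
    have hsub : Set.univ ⊆ Bset D L 0 := fun ω _ =>
      Set.mem_iUnion.2 ⟨0, by rw [Cset_zero_univ ξ D hD L hL]; trivial⟩
    calc (1 : ENNReal) = P Set.univ := measure_univ.symm
      _ ≤ P (Bset D L 0) := measure_mono hsub
  | succ k ih =>
    calc (1 - ENNReal.ofReal (1 / L)) ^ (k + 1)
        = (1 - ENNReal.ofReal (1 / L)) * (1 - ENNReal.ofReal (1 / L)) ^ k := by
          rw [pow_succ, mul_comm]
      _ ≤ (1 - ENNReal.ofReal (1 / L)) * P (Bset D L k) := mul_le_mul_right ih _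
      _ ≤ P (Bset D L (k + 1)) :=
          prob_Bset_succ ξ D hξmeas hξindep hξ1 hξ2 hD L k hL hae_ex

end Main

end SRW


open SRW in
/-- Proposition 2.1, second part: the local time at the origin of the SRW up
to the exit time of `(-l, l)` is bounded away from zero in probability at scale `l`.
`D_n = ξ_1 + ⋯ + ξ_n` is the simple symmetric random walk on `ℤ`,
`a_l := min {n ≥ 0 : |D_n| ≥ l}` and `𝓛^l_0 := #{0 ≤ n < a_l : D_n = 0}`.
Then for every `ε > 0` there exists `c > 0` with
`limsup_{l → ∞} P( 𝓛^l_0 < c·l ) ≤ ε`. -/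
theorem srw_local_time_at_origin_bounded_away_from_zero
    {Ω : Type*} [MeasurableSpace Ω] (P : Measure Ω) [IsProbabilityMeasure P]
    (ξ : ℕ → Ω → ℤ)
    (hξmeas : ∀ i, Measurable (ξ i))
    (hξindep : iIndepFun ξ P)
    (hξ1 : ∀ i, P {ω | ξ i ω = 1} = 1 / 2)
    (hξ2 : ∀ i, P {ω | ξ i ω = -1} = 1 / 2)
    (D : ℕ → Ω → ℤ)
    (hD : ∀ n ω, D n ω = ∑ i ∈ Finset.range n, ξ i ω)
    (a : ℝ → Ω → ℕ)
    (hameas : ∀ l, Measurable (a l))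
    (ha : ∀ l, ∀ᵐ ω ∂P, IsLeast {n : ℕ | l ≤ |(D n ω : ℝ)|} (a l ω)) :
    ∀ ε > 0, ∃ c > (0 : ℝ),
      Filter.limsup
        (fun l : ℝ =>
          (P {ω |
            ((((Finset.range (a l ω)).filter (fun n => D n ω = 0)).card : ℕ) : ℝ) < c * l}).toReal)
        atTop ≤ ε := by
  intro ε hε
  refine ⟨ε / 2, by positivity, ?_⟩
  -- a.e. existence of a stop for every shifted walk
  have hae_ex : ∀ L t : ℕ, 1 ≤ L → ∀ᵐ ω ∂P, ∃ n, ω ∉ Gset ξ L t n := by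
    intro L t hL
    filter_upwards [ae_pm_one ξ hξmeas hξ1 hξ2, ha ((L + t : ℕ) : ℝ)] with ω h1 h2
    set n₀ := a ((L + t : ℕ) : ℝ) ω with hn₀
    have h3 : ((L + t : ℕ) : ℝ) ≤ |((D n₀ ω : ℤ) : ℝ)| := h2.1
    rw [← Int.cast_abs] at h3
    have hint : ((L : ℤ) + (t : ℤ)) ≤ |D n₀ ω| := by exact_mod_cast h3
    have habs₀ := abs_D_le ξ D hD h1 n₀
    have habst := abs_D_le ξ D hD h1 t
    have htn : t < n₀ := by omega
    refine ⟨n₀ - t, fun hG => ?_⟩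
    refine hG (n₀ - t) (by omega) le_rfl (Or.inr ?_)
    have hSt := St_eq_D ξ D hD t (n₀ - t) ω
    rw [Nat.add_sub_cancel' htn.le] at hSt
    have hsub := abs_sub_abs_le_abs_sub (D n₀ ω) (D t ω)
    rw [hSt]
    omega
  -- the eventual bound
  have hub : ∀ᶠ l : ℝ in atTop,
      (P {ω | ((((Finset.range (a l ω)).filter (fun n => D n ω = 0)).card : ℕ) : ℝ)
        < ε / 2 * l}).toReal ≤ ε := by
    filter_upwards [eventually_ge_atTop (1 : ℝ), eventually_ge_atTop (2 / ε)] with l hl1 hl2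
    have hl0 : (0 : ℝ) < l := lt_of_lt_of_le one_pos hl1
    set c : ℝ := ε / 2 with hc
    set L : ℕ := ⌈l⌉₊ with hLdef
    have hL1 : 1 ≤ L := Nat.one_le_iff_ne_zero.2 (by
      simp only [hLdef, ne_eq, Nat.ceil_eq_zero, not_le]
      exact hl0)
    have hLreal : l ≤ (L : ℝ) := Nat.le_ceil l
    have hLup : (L : ℝ) < l + 1 := Nat.ceil_lt_add_one hl0.le
    set k : ℕ := ⌈c * l⌉₊ with hkdef
    have hck : c * l ≤ (k : ℝ) := Nat.le_ceil _
    have hkup : (k : ℝ) < c * l + 1 := Nat.ceil_lt_add_one (by positivity)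
    -- pointwise exclusion
    have hsubset : ∀ ω : Ω, (∀ i, ξ i ω = 1 ∨ ξ i ω = -1) →
        IsLeast {n : ℕ | l ≤ |((D n ω : ℤ) : ℝ)|} (a l ω) → ω ∈ Bset D L k →
        ¬ (((((Finset.range (a l ω)).filter (fun n => D n ω = 0)).card : ℕ) : ℝ) < c * l) := by
      intro ω hpm hleast hB
      obtain ⟨t, hz, hcard, hb⟩ := Set.mem_iUnion.1 hB
      have hta : t < a l ω := by
        by_contra hcon
        push_neg at hcon
        have hab := hb (a l ω) hcon
        have hreal : |((D (a l ω) ω : ℤ) : ℝ)| ≤ (L : ℝ) - 1 := by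
          rw [← Int.cast_abs]
          have : |D (a l ω) ω| ≤ (L : ℤ) - 1 := by omega
          have h2 : ((|D (a l ω) ω| : ℤ) : ℝ) ≤ (((L : ℤ) - 1 : ℤ) : ℝ) := by
            exact_mod_cast this
          push_cast at h2 ⊢
          linarith
        have hge := hleast.1
        rw [Set.mem_setOf_eq] at hge
        have : l ≤ (L : ℝ) - 1 := hge.trans hreal
        linarith
      have hins : insert t ((Finset.range t).filter (fun n => D n ω = 0)) ⊆
          (Finset.range (a l ω)).filter (fun n => D n ω = 0) := by
        intro n hn
        rcases Finset.mem_insert.1 hn with rfl | hn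
        · exact Finset.mem_filter.2 ⟨Finset.mem_range.2 hta, hz⟩
        · obtain ⟨hr, hz'⟩ := Finset.mem_filter.1 hn
          exact Finset.mem_filter.2 ⟨Finset.mem_range.2 ((Finset.mem_range.1 hr).trans hta), hz'⟩
      have hkcard : k + 1 ≤ ((Finset.range (a l ω)).filter (fun n => D n ω = 0)).card := by
        have := Finset.card_le_card hins
        rwa [Finset.card_insert_of_notMem (fun h => absurd (Finset.mem_filter.1 h).1
          (by simp)), hcard] at this
      push_neg
      have : (k : ℝ) + 1 ≤ (((Finset.range (a l ω)).filter (fun n => D n ω = 0)).card : ℝ) := by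
        exact_mod_cast hkcard
      linarith
    -- measure bound
    have hBmeas : MeasurableSet (Bset D L k) :=
      MeasurableSet.iUnion fun t =>
        mB_le ξ hξmeas {i | i < t} _ (measurableSet_Cset_block ξ D hD L k t)
    have hgood : ∀ᵐ ω ∂P, (∀ i, ξ i ω = 1 ∨ ξ i ω = -1) ∧
        IsLeast {n : ℕ | l ≤ |((D n ω : ℤ) : ℝ)|} (a l ω) :=
      (ae_pm_one ξ hξmeas hξ1 hξ2).and (ha l)
    have hnull : P {ω | ¬ ((∀ i, ξ i ω = 1 ∨ ξ i ω = -1) ∧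
        IsLeast {n : ℕ | l ≤ |((D n ω : ℤ) : ℝ)|} (a l ω))} = 0 := ae_iff.1 hgood
    have hsub2 : {ω | ((((Finset.range (a l ω)).filter (fun n => D n ω = 0)).card : ℕ) : ℝ)
        < c * l} ⊆ (Bset D L k)ᶜ ∪ {ω | ¬ ((∀ i, ξ i ω = 1 ∨ ξ i ω = -1) ∧
          IsLeast {n : ℕ | l ≤ |((D n ω : ℤ) : ℝ)|} (a l ω))} := by
      intro ω hω
      by_cases hg : (∀ i, ξ i ω = 1 ∨ ξ i ω = -1) ∧
          IsLeast {n : ℕ | l ≤ |((D n ω : ℤ) : ℝ)|} (a l ω)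
      · left
        intro hB
        exact hsubset ω hg.1 hg.2 hB hω
      · right
        exact hg
    have hmb : P {ω | ((((Finset.range (a l ω)).filter (fun n => D n ω = 0)).card : ℕ) : ℝ)
        < c * l} ≤ P ((Bset D L k)ᶜ) := by
      calc P _ ≤ P ((Bset D L k)ᶜ ∪ _) := measure_mono hsub2
        _ ≤ P ((Bset D L k)ᶜ) + P _ := measure_union_le _ _
        _ = P ((Bset D L k)ᶜ) := by rw [hnull, add_zero]
    -- pass to real numbers
    have hq1L : 1 / (L : ℝ) ≤ 1 := by
      rw [div_le_one (by exact_mod_cast hL1)]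
      exact_mod_cast hL1
    have hqtoReal : ((1 - ENNReal.ofReal (1 / (L : ℝ))) ^ k).toReal = (1 - 1 / (L : ℝ)) ^ k := by
      rw [ENNReal.toReal_pow, ENNReal.toReal_sub_of_le (ENNReal.ofReal_le_one.2 hq1L)
        ENNReal.one_ne_top, ENNReal.toReal_one, ENNReal.toReal_ofReal (by positivity)]
    have hBk := prob_Bset_ge ξ D hξmeas hξindep hξ1 hξ2 hD L hL1
      (fun t => hae_ex L t hL1) k
    have hPBk : (1 - 1 / (L : ℝ)) ^ k ≤ (P (Bset D L k)).toReal := by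
      rw [← hqtoReal]
      exact ENNReal.toReal_mono (measure_ne_top P _) hBk
    have htoReal : (P {ω | ((((Finset.range (a l ω)).filter (fun n => D n ω = 0)).card : ℕ) : ℝ)
        < c * l}).toReal ≤ 1 - (P (Bset D L k)).toReal := by
      have h1 := ENNReal.toReal_mono (measure_ne_top P _) hmb
      rwa [prob_compl_eq_one_sub hBmeas,
        ENNReal.toReal_sub_of_le prob_le_one ENNReal.one_ne_top, ENNReal.toReal_one] at h1
    -- Bernoulli
    have hber : 1 - (k : ℝ) * (1 / (L : ℝ)) ≤ (1 - 1 / (L : ℝ)) ^ k := by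
      have := one_add_mul_le_pow (a := -(1 / (L : ℝ))) (by linarith) k
      calc 1 - (k : ℝ) * (1 / (L : ℝ)) = 1 + (k : ℝ) * (-(1 / (L : ℝ))) := by ring
        _ ≤ (1 + -(1 / (L : ℝ))) ^ k := this
        _ = (1 - 1 / (L : ℝ)) ^ k := by ring_nf
    -- final chain
    have hkL : (k : ℝ) * (1 / (L : ℝ)) ≤ c + 1 / l := by
      rw [mul_one_div]
      have hdd : (k : ℝ) / (L : ℝ) ≤ (c * l + 1) / l :=
        div_le_div₀ (by positivity) hkup.le hl0 hLreal
      have heq : (c * l + 1) / l = c + 1 / l := by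
        rw [add_div, mul_div_cancel_right₀ _ (ne_of_gt hl0)]
      linarith
    have h1l : 1 / l ≤ ε / 2 := by
      rw [div_le_div_iff₀ hl0 (by norm_num : (0:ℝ) < 2)]
      have h2 := mul_le_mul_of_nonneg_left hl2 hε.le
      have h3 : ε * (2 / ε) = 2 := by field_simp
      linarith
    calc (P {ω | ((((Finset.range (a l ω)).filter (fun n => D n ω = 0)).card : ℕ) : ℝ)
          < c * l}).toReal
        ≤ 1 - (P (Bset D L k)).toReal := htoReal
      _ ≤ 1 - (1 - 1 / (L : ℝ)) ^ k := by linarith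
      _ ≤ (k : ℝ) * (1 / (L : ℝ)) := by linarith
      _ ≤ c + 1 / l := hkL
      _ ≤ ε / 2 + ε / 2 := by rw [hc]; linarith
      _ = ε := by ring
  -- conclude via limsup
  have hcb : IsCoboundedUnder (· ≤ ·) atTop
      (fun l : ℝ => (P {ω |
        ((((Finset.range (a l ω)).filter (fun n => D n ω = 0)).card : ℕ) : ℝ)
          < ε / 2 * l}).toReal) := by
    refine Filter.IsBoundedUnder.isCoboundedUnder_le ?_
    exact ⟨0, Filter.eventually_map.2 (Filter.Eventually.of_forall fun l => ENNReal.toReal_nonneg)⟩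
  exact Filter.limsup_le_of_le hcb hub
end

section
/- Let V be a nonempty finite type, o ∈ V, and Q a real V×V matrix such that Q x y ≥ 0 for all x ≠ y, each row of Q sums to zero, and there exists a strictly positive vector π : V → (0,∞) with π(x)·Q x y = π(y)·Q y x for all x, y (detailed balance). Assume Q is irreducible, i.e. for all x ≠ y there is a finite chain x = z_0, z_1, …, z_k = y with Q z_i z_{i+1} > 0 for each i. Then the function t ↦ (exp(t·Q))_{o,o} is non-increasing on [0,∞) and converges, as t → ∞, to π(o) / ∑_{x∈V} π(x). -/
open Filter Matrix

private lemma dirichlet_form {V : Type*} [Fintype V] (B : Matrix V V ℝ)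
    (hsym : ∀ x y, B x y = B y x) (hrow : ∀ x, ∑ y, B x y = 0) (g : V → ℝ) :
    ∑ x, ∑ y, B x y * (g x * g y) = -(1/2) * ∑ x, ∑ y, B x y * (g x - g y)^2 := by
  have hcol : ∀ y, ∑ x, B x y = 0 := fun y => by
    rw [Finset.sum_congr rfl fun x _ => hsym x y]; exact hrow y
  have h1 : ∑ x, ∑ y, B x y * g x ^ 2 = 0 := Finset.sum_eq_zero fun x _ => by
    rw [← Finset.sum_mul, hrow, zero_mul]
  have h2 : ∑ x, ∑ y, B x y * g y ^ 2 = 0 := by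
    rw [Finset.sum_comm]
    exact Finset.sum_eq_zero fun y _ => by rw [← Finset.sum_mul, hcol, zero_mul]
  have expand : ∑ x, ∑ y, B x y * (g x - g y)^2
      = (∑ x, ∑ y, B x y * g x ^ 2) + (∑ x, ∑ y, B x y * g y ^ 2)
        - 2 * ∑ x, ∑ y, B x y * (g x * g y) := by
    rw [← Finset.sum_add_distrib, Finset.mul_sum, ← Finset.sum_sub_distrib]
    refine Finset.sum_congr rfl fun x _ => ?_
    rw [← Finset.sum_add_distrib, Finset.mul_sum, ← Finset.sum_sub_distrib]
    exact Finset.sum_congr rfl fun y _ => by ring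
  rw [expand, h1, h2]; ring

/-- Proposition: monotone convergence of a reversible Markov chain to
equilibrium.  Let `V` be a nonempty finite type, `o ∈ V`, and `Q` a real `V × V` matrix with
non-negative off-diagonal entries, zero row sums, satisfying detailed balance with respect to a
strictly positive vector `π`, and irreducible.  Then `t ↦ (exp (t • Q)) o o` is non-increasing
on `[0, ∞)` and converges as `t → ∞` to `π o / ∑ x, π x`. -/
theorem reversible_mc_monotone_convergence_to_equilibrium
    {V : Type*} [Fintype V] [DecidableEq V] [Nonempty V] (o : V)
    (Q : Matrix V V ℝ)
    (hoff : ∀ x y, x ≠ y → 0 ≤ Q x y)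
    (hrow : ∀ x, ∑ y, Q x y = 0)
    (π : V → ℝ) (hπpos : ∀ x, 0 < π x)
    (hdb : ∀ x y, π x * Q x y = π y * Q y x)
    (hirr : ∀ x y, x ≠ y → ∃ (k : ℕ) (z : ℕ → V), z 0 = x ∧ z k = y ∧
      ∀ i < k, 0 < Q (z i) (z (i + 1))) :
    AntitoneOn (fun t : ℝ => NormedSpace.exp (t • Q) o o) (Set.Ici 0) ∧
      Tendsto (fun t : ℝ => NormedSpace.exp (t • Q) o o) atTop
        (nhds (π o / ∑ x, π x)) := by
  classical
  set s : V → ℝ := fun x => Real.sqrt (π x) with hs_def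
  have hspos : ∀ x, 0 < s x := fun x => Real.sqrt_pos.2 (hπpos x)
  have hs2 : ∀ x, s x * s x = π x := fun x => Real.mul_self_sqrt (hπpos x).le
  set A : Matrix V V ℝ := Matrix.of (fun x y => s x * Q x y * (s y)⁻¹) with hA_def
  set B : Matrix V V ℝ := Matrix.of (fun x y => π x * Q x y) with hB_def
  have hBsym : ∀ x y, B x y = B y x := fun x y => hdb x y
  have hBrow : ∀ x, ∑ y, B x y = 0 := fun x => by
    simp only [hB_def, Matrix.of_apply, ← Finset.mul_sum, hrow x, mul_zero]
  -- quadratic form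
  have hform : ∀ f : V → ℝ, f ⬝ᵥ (A *ᵥ f)
      = -(1/2) * ∑ x, ∑ y, B x y * ((f x / s x) - (f y / s y))^2 := by
    intro f
    rw [← dirichlet_form B hBsym hBrow (fun x => f x / s x)]
    rw [dotProduct, Finset.sum_congr rfl fun x _ => rfl]
    refine Finset.sum_congr rfl fun x _ => ?_
    rw [Matrix.mulVec, dotProduct, Finset.mul_sum]
    refine Finset.sum_congr rfl fun y _ => ?_
    have hx := (hspos x).ne'
    have hy := (hspos y).ne'
    simp only [hB_def, hA_def, Matrix.of_apply]
    field_simp [hB_def, hA_def]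
    rw [← hs2 x]
    ring
  -- Hermitian
  have hAh : A.IsHermitian := by
    rw [Matrix.IsHermitian]
    ext x y
    simp only [Matrix.conjTranspose_apply, hA_def, Matrix.of_apply, star_trivial]
    have key : s y * Q y x * s y = s x * Q x y * s x := by
      calc s y * Q y x * s y = (s y * s y) * Q y x := by ring
        _ = π x * Q x y := by rw [hs2 y]; exact (hdb x y).symm
        _ = s x * Q x y * s x := by rw [← hs2 x]; ring
    rw [← div_eq_mul_inv, ← div_eq_mul_inv, div_eq_div_iff (hspos x).ne' (hspos y).ne']
    linear_combination key
  -- conjugation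
  set D : Matrix V V ℝ := Matrix.diagonal s with hD_def
  set Dinv : Matrix V V ℝ := Matrix.diagonal (fun x => (s x)⁻¹) with hDinv_def
  have hDD : D * Dinv = 1 := by
    rw [hD_def, hDinv_def, Matrix.diagonal_mul_diagonal]
    rw [show (fun x => s x * (s x)⁻¹) = fun _ => (1:ℝ) from
      funext fun x => mul_inv_cancel₀ (hspos x).ne']
    exact Matrix.diagonal_one
  have hDunit : IsUnit D := by
    apply Matrix.isUnit_iff_isUnit_det _ |>.2
    exact IsUnit.of_mul_eq_one _ ((Matrix.det_mul D Dinv).symm.trans (by rw [hDD, Matrix.det_one]))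
  have hDinv_eq : D⁻¹ = Dinv := Matrix.inv_eq_right_inv hDD
  have hconj : ∀ t : ℝ, t • A = D * (t • Q) * D⁻¹ := by
    intro t
    rw [hDinv_eq]
    ext x y
    rw [Matrix.mul_diagonal, Matrix.diagonal_mul]
    simp only [Matrix.smul_apply, hA_def, Matrix.of_apply, smul_eq_mul]
    ring
  have hexp_eq : ∀ t : ℝ, NormedSpace.exp (t • Q) o o = NormedSpace.exp (t • A) o o := by
    intro t
    rw [hconj, Matrix.exp_conj D _ hDunit, hDinv_eq, hDinv_def, hD_def,
      Matrix.mul_diagonal, Matrix.diagonal_mul]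
    rw [mul_comm, ← mul_assoc, inv_mul_cancel₀ (hspos o).ne', one_mul]
  -- spectral theory
  set U : Matrix V V ℝ := (hAh.eigenvectorUnitary : Matrix V V ℝ) with hU_def
  set mu : V → ℝ := hAh.eigenvalues with hmu_def
  have hU1 : U * star U = 1 := Matrix.mem_unitaryGroup_iff.mp hAh.eigenvectorUnitary.2
  have hU1' : star U * U = 1 := Matrix.mem_unitaryGroup_iff'.mp hAh.eigenvectorUnitary.2
  have hspec : A = U * Matrix.diagonal mu * star U := by
    have h := hAh.spectral_theorem
    have h2 : (RCLike.ofReal ∘ hAh.eigenvalues : V → ℝ) = mu := funext fun j => by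
      simp [hmu_def]
    rw [h2] at h
    exact h
  have hAU : A * U = U * Matrix.diagonal mu := by
    rw [hspec, mul_assoc (U * Matrix.diagonal mu) (star U) U, hU1', mul_one]
  have hcol_eig : ∀ j, (A *ᵥ fun x => U x j) = fun x => mu j * U x j := by
    intro j; funext x
    have h := congrFun (congrFun hAU x) j
    simp only [Matrix.mul_apply] at h
    simp only [Matrix.mulVec, dotProduct, h, Matrix.diagonal_apply, mul_ite, mul_zero,
      Finset.sum_ite_eq', Finset.mem_univ, if_true]
    ring
  have horth : ∀ j k, ∑ x, U x j * U x k = if j = k then 1 else 0 := by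
    intro j k
    have h := congrFun (congrFun hU1' j) k
    simp only [Matrix.mul_apply, Matrix.star_apply, star_trivial,
      Matrix.one_apply] at h
    rw [← h]
  have hmuval : ∀ j, mu j = (fun x => U x j) ⬝ᵥ (A *ᵥ fun x => U x j) := by
    intro j
    rw [hcol_eig j]
    have : ((fun x => U x j) ⬝ᵥ fun x => mu j * U x j) = mu j * ∑ x, U x j * U x j := by
      rw [dotProduct, Finset.mul_sum]
      exact Finset.sum_congr rfl fun x _ => by ring
    rw [this, horth j j, if_pos rfl, mul_one]
  have hBterm_nonneg : ∀ (g : V → ℝ) (x y : V), 0 ≤ B x y * (g x - g y)^2 := by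
    intro g x y
    rcases eq_or_ne x y with rfl | hxy
    · simp
    · exact mul_nonneg (mul_nonneg (hπpos x).le (hoff x y hxy)) (sq_nonneg _)
  have hform_le : ∀ f : V → ℝ, f ⬝ᵥ (A *ᵥ f) ≤ 0 := by
    intro f
    rw [hform f]
    have h := Finset.sum_nonneg (fun x (_ : x ∈ Finset.univ) =>
      Finset.sum_nonneg fun y (_ : y ∈ Finset.univ) => hBterm_nonneg (fun x => f x / s x) x y)
    linarith
  have hmule : ∀ j, mu j ≤ 0 := fun j => (hmuval j) ▸ hform_le _
  have hSpos : 0 < ∑ x, π x := Finset.sum_pos (fun x _ => hπpos x) Finset.univ_nonempty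
  -- zero eigenvalue columns are proportional to s
  have hzero_col : ∀ j, mu j = 0 → ∀ x, U x j = (U o j / s o) * s x := by
    intro j hj
    set g : V → ℝ := fun x => U x j / s x with hg_def
    have h0 : ∑ x, ∑ y, B x y * (g x - g y)^2 = 0 := by
      have h1 := hform (fun x => U x j)
      rw [← hmuval j, hj] at h1
      linarith
    have hz : ∀ x y, B x y * (g x - g y)^2 = 0 := by
      intro x y
      have houter := (Finset.sum_eq_zero_iff_of_nonneg (fun x _ =>
        Finset.sum_nonneg fun y _ => hBterm_nonneg g x y)).1 h0 x (Finset.mem_univ x)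
      exact (Finset.sum_eq_zero_iff_of_nonneg (fun y _ =>
        hBterm_nonneg g x y)).1 houter y (Finset.mem_univ y)
    have hterm : ∀ x y, 0 < Q x y → g x = g y := by
      intro x y hQ
      rcases eq_or_ne x y with rfl | hxy
      · rfl
      · have hB : 0 < B x y := mul_pos (hπpos x) hQ
        have := hz x y
        rcases mul_eq_zero.1 this with h | h
        · exact absurd h hB.ne'
        · exact sub_eq_zero.1 (pow_eq_zero_iff two_ne_zero |>.1 h)
    have hconst : ∀ x, g x = g o := by
      intro x
      rcases eq_or_ne x o with rfl | hxo
      · rfl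
      · obtain ⟨k, z, hz0, hzk, hstep⟩ := hirr x o hxo
        have key : ∀ i, i ≤ k → g (z i) = g x := by
          intro i hi
          induction i with
          | zero => rw [hz0]
          | succ n ih =>
            have hnk : n < k := Nat.lt_of_succ_le hi
            rw [← hterm (z n) (z (n + 1)) (hstep n hnk), ih hnk.le]
        rw [← hzk]
        exact (key k le_rfl).symm
    intro x
    have h1 : U x j / s x = U o j / s o := hconst x
    rw [div_eq_div_iff (hspos x).ne' (hspos o).ne'] at h1
    rw [div_mul_eq_mul_div, eq_div_iff (hspos o).ne']
    linear_combination h1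
  have hcsq : ∀ j, mu j = 0 → (U o j)^2 = π o / ∑ x, π x := by
    intro j hj
    set c : ℝ := U o j / s o with hc_def
    have hcol := hzero_col j hj
    have hnorm : c^2 * ∑ x, π x = 1 := by
      have h1 := horth j j
      rw [if_pos rfl] at h1
      rw [← h1, Finset.mul_sum]
      refine (Finset.sum_congr rfl fun x _ => ?_).symm
      rw [hcol x, ← hs2 x]
      ring
    have : (U o j)^2 = c^2 * π o := by
      rw [hcol o, ← hs2 o, ← hc_def]
      ring
    rw [this, eq_div_iff hSpos.ne']
    linear_combination π o * hnorm
  -- uniqueness of the zero eigenvalue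
  have hUnz : ∀ j, mu j = 0 → U o j ≠ 0 := by
    intro j hj h
    have h3 := hcsq j hj
    rw [h] at h3
    rw [zero_pow two_ne_zero] at h3
    exact (div_pos (hπpos o) hSpos).ne' h3.symm
  have huniq : ∀ j k, mu j = 0 → mu k = 0 → j = k := by
    intro j k hj hk
    by_contra hjk
    have h1 := horth j k
    rw [if_neg hjk] at h1
    have h2 : ∑ x, U x j * U x k = (U o j / s o) * (U o k / s o) * ∑ x, π x := by
      rw [Finset.mul_sum]
      refine Finset.sum_congr rfl fun x _ => ?_
      rw [hzero_col j hj x, hzero_col k hk x, ← hs2 x]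
      ring
    rw [h2] at h1
    exact (mul_ne_zero (mul_ne_zero
      (div_ne_zero (hUnz j hj) (hspos o).ne') (div_ne_zero (hUnz k hk) (hspos o).ne'))
      hSpos.ne') h1
  -- existence of the zero eigenvalue
  have hAs : A *ᵥ s = 0 := by
    funext x
    simp only [Matrix.mulVec, dotProduct, hA_def, Matrix.of_apply, Pi.zero_apply]
    have hterm : ∀ y, s x * Q x y * (s y)⁻¹ * s y = s x * Q x y := fun y => by
      rw [mul_assoc, inv_mul_cancel₀ (hspos y).ne', mul_one]
    rw [Finset.sum_congr rfl fun y _ => hterm y, ← Finset.mul_sum, hrow, mul_zero]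
  have hex : ∃ j, mu j = 0 := by
    by_contra h
    push_neg at h
    have h1 : U *ᵥ (Matrix.diagonal mu *ᵥ (star U *ᵥ s)) = 0 := by
      rw [Matrix.mulVec_mulVec, Matrix.mulVec_mulVec, ← hspec, hAs]
    have h2 : Matrix.diagonal mu *ᵥ (star U *ᵥ s) = 0 := by
      have h3 := congrArg (fun v => star U *ᵥ v) h1
      simpa [Matrix.mulVec_mulVec, ← mul_assoc, hU1', Matrix.one_mulVec,
        Matrix.mulVec_zero] using h3
    have hw0 : (star U *ᵥ s) = 0 := by
      funext j
      have h4 : mu j * (star U *ᵥ s) j = 0 := by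
        simpa [Matrix.mulVec_diagonal] using congrFun h2 j
      simpa using (mul_eq_zero.1 h4).resolve_left (h j)
    have hs0 : s = 0 := by
      have h5 := congrArg (fun v => U *ᵥ v) hw0
      simpa [Matrix.mulVec_mulVec, hU1, Matrix.one_mulVec, Matrix.mulVec_zero] using h5
    exact (hspos o).ne' (congrFun hs0 o)
  -- entry formula for the exponential
  have hUunit : IsUnit U := by
    apply (Matrix.isUnit_iff_isUnit_det U).2
    exact IsUnit.of_mul_eq_one _
      ((Matrix.det_mul U (star U)).symm.trans (by rw [hU1, Matrix.det_one]))
  have hUinv : U⁻¹ = star U := Matrix.inv_eq_right_inv hU1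
  have hsmulA : ∀ t : ℝ, t • A = U * Matrix.diagonal (fun j => t * mu j) * U⁻¹ := by
    intro t
    rw [hUinv, hspec, show (fun j => t * mu j) = t • mu from rfl, Matrix.diagonal_smul,
      mul_smul_comm, smul_mul_assoc]
  have hentry : ∀ t : ℝ, NormedSpace.exp (t • A) o o
      = ∑ j, Real.exp (t * mu j) * (U o j)^2 := by
    intro t
    rw [hsmulA t, Matrix.exp_conj U _ hUunit, hUinv, Matrix.exp_diagonal]
    rw [Pi.exp_def, Matrix.mul_apply]
    refine Finset.sum_congr rfl fun j _ => ?_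
    rw [Matrix.mul_diagonal, Matrix.star_apply, star_trivial, ← Real.exp_eq_exp_ℝ]
    ring
  obtain ⟨j0, hj0⟩ := hex
  have hfun : ∀ t : ℝ, NormedSpace.exp (t • Q) o o = ∑ j, Real.exp (t * mu j) * (U o j)^2 :=
    fun t => (hexp_eq t).trans (hentry t)
  constructor
  · intro a _ b _ hab
    simp only
    rw [hfun a, hfun b]
    refine Finset.sum_le_sum fun j _ => ?_
    have hle : b * mu j ≤ a * mu j := mul_le_mul_of_nonpos_right hab (hmule j)
    exact mul_le_mul_of_nonneg_right (Real.exp_le_exp.2 hle) (sq_nonneg _)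
  · have hcongr : (fun t : ℝ => NormedSpace.exp (t • Q) o o)
        = fun t => ∑ j, Real.exp (t * mu j) * (U o j)^2 := funext hfun
    rw [hcongr]
    have hsum : ∑ j, (if mu j = 0 then (U o j)^2 else 0) = π o / ∑ x, π x := by
      have h1 := Finset.sum_eq_single (s := Finset.univ)
        (f := fun j => if mu j = 0 then (U o j)^2 else 0) j0
        (fun j _ hjne => if_neg fun hz => hjne (huniq j j0 hz hj0))
        (fun habs => absurd (Finset.mem_univ j0) habs)
      rw [h1]
      simpa [hj0] using hcsq j0 hj0
    rw [← hsum]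
    refine tendsto_finset_sum _ fun j _ => ?_
    rcases eq_or_ne (mu j) 0 with hj | hj
    · rw [if_pos hj]
      simp only [hj, mul_zero, Real.exp_zero, one_mul]
      exact tendsto_const_nhds
    · rw [if_neg hj]
      have hneg : mu j < 0 := lt_of_le_of_ne (hmule j) hj
      have h1 : Tendsto (fun t : ℝ => t * mu j) atTop atBot :=
        Filter.Tendsto.atTop_mul_const_of_neg hneg tendsto_id
      have h2 : Tendsto (fun t : ℝ => Real.exp (t * mu j)) atTop (nhds 0) :=
        Real.tendsto_exp_atBot.comp h1
      simpa using h2.mul_const ((U o j)^2)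
end
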